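/- There is a universal constant C such that the following holds. Let G be a strongly connected directed graph on vertices 1,…,N with diameter d, let Ω be a finite state space with full-support prior μ, let f : Ω → [0,1], and let Π_{1,0},…,Π_{N,0} be initial partitions of Ω. Then for all ε ∈ (0,1) and δ ∈ (0,1], after at most C·N·d²/(δε²) messages of the spanning-tree protocol on G, every pair of agents i, j satisfies μ({ω : |E_{i,t}(ω) − E_{j,t}(ω)| > ε}) ≤ δ. -/

import Mathlib

open scoped Classical BigOperators

/-- A partition of a finite type, given by the cell containing each point. -/
structure FinPartition (Ω : Type*) [Fintype Ω] [DecidableEq Ω] where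
  cell : Ω → Finset Ω
  mem_cell : ∀ ω, ω ∈ cell ω
  cell_eq : ∀ ω ω', ω' ∈ cell ω → cell ω' = cell ω

variable {Ω : Type*} [Fintype Ω] [DecidableEq Ω]

/-- Conditional expectation `E[g | S]` of `g` over `S` under the weights `μ`. -/
noncomputable def condExp (μ g : Ω → ℝ) (S : Finset Ω) : ℝ :=
  (∑ ω ∈ S, μ ω * g ω) / ∑ ω ∈ S, μ ω

/-- `E_P(ω) = E[f | P(ω)]`, the partition-conditional expectation of `f`. -/
noncomputable def expOn (μ f : Ω → ℝ) (P : FinPartition Ω) (ω : Ω) : ℝ :=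
  condExp μ f (P.cell ω)

/-- The cell `Θ_P(ω) = {ω' : E_P(ω') = E_P(ω)}` of the level-set partition of `E_P`. -/
noncomputable def levelCell (μ f : Ω → ℝ) (P : FinPartition Ω) (ω : Ω) : Finset Ω :=
  Finset.univ.filter fun ω' => expOn μ f P ω' = expOn μ f P ω

/-- `P` refines `Q`: every cell of `P` is contained in the corresponding cell of `Q`. -/
def FinPartition.Refines (P Q : FinPartition Ω) : Prop := ∀ ω, P.cell ω ⊆ Q.cell ω

/-- The squared 2-norm `‖F‖₂² = Σ_ω μ(ω) F(ω)²`. -/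
noncomputable def norm2 (μ F : Ω → ℝ) : ℝ := ∑ ω, μ ω * F ω ^ 2

/-- Refine a partition by intersecting each cell with the level sets of `g`. -/
noncomputable def FinPartition.refineBy {M : Type*} (R : FinPartition Ω) (g : Ω → M) :
    FinPartition Ω where
  cell ω := R.cell ω ∩ Finset.univ.filter fun ω' => g ω' = g ω
  mem_cell ω := by
    simp only [Finset.mem_inter, Finset.mem_filter, Finset.mem_univ, true_and]
    exact ⟨R.mem_cell ω, trivial⟩
  cell_eq := by
    intro ω ω' h
    simp only [Finset.mem_inter, Finset.mem_filter, Finset.mem_univ, true_and] at h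
    show R.cell ω' ∩ Finset.univ.filter (fun ω'' => g ω'' = g ω') =
      R.cell ω ∩ Finset.univ.filter (fun ω'' => g ω'' = g ω)
    rw [R.cell_eq ω ω' h.1, h.2]

/-- `reachIn G k u v`: there is a directed walk of length exactly `k` from `u` to `v`. -/
def reachIn {V : Type*} (G : V → V → Prop) : ℕ → V → V → Prop
  | 0, u, v => u = v
  | k + 1, u, v => ∃ w, G u w ∧ reachIn G k w v

/-- One agent sends its current expectation to another: the multi-agent protocol.
`multiStep μ f Pi0 sched t i` is agent `i`'s partition after `t` messages, where the
`(u+1)`-st message is sent along the directed edge `sched u`. -/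
noncomputable def multiStep {N : ℕ} (μ f : Ω → ℝ) (Pi0 : Fin N → FinPartition Ω)
    (sched : ℕ → Fin N × Fin N) : ℕ → Fin N → FinPartition Ω
  | 0 => Pi0
  | t + 1 => fun k =>
    let prev := multiStep μ f Pi0 sched t
    if k = (sched t).2 then (prev k).refineBy (expOn μ f (prev (sched t).1)) else prev k

/-!
Write `Φ_k(t) = ‖E_{k,t}‖₂²`. Once agent `i` has told agent `j` its expectation at time `c`,
`E_{i,c}` is constant on `j`'s cells, hence is the orthogonal projection of `E_{j,s}` for `s > c`,
and `‖E_{j,s} - E_{i,c}‖² = Φ_j(s) - Φ_i(c)`. Along a chain of `m` messages this degrades to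
`‖·‖² ≤ m · (gain in Φ)`. Potentials increase and lie in `[0, 1]`, so among `K ≈ 8d / (δε²)`
consecutive windows of `d + 1` rounds there is one in which the root gains at most `1 / K`. In that
window the `O₁`-pass carries the root's expectation down `T₁` to every agent in at most `d + 1`
messages, and the following `O₂`-passes carry every agent's expectation up `T₂` to the root before
the window closes. Hence every agent is within `(d + 1) / K` of the root's expectation at the start
of the window, any two agents are within `4 (d + 1) / K ≤ δε²` of each other, and Chebyshev's
inequality concludes.
-/


open Finset

namespace FinPartition

lemma mem_cell_comm (P : FinPartition Ω) {ω ω' : Ω} : ω' ∈ P.cell ω ↔ ω ∈ P.cell ω' := by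
  constructor <;> intro h
  · rw [P.cell_eq ω ω' h]; exact P.mem_cell ω
  · rw [P.cell_eq ω' ω h]; exact P.mem_cell ω'

lemma Refines.trans {P Q R : FinPartition Ω} (hPQ : P.Refines Q) (hQR : Q.Refines R) :
    P.Refines R :=
  fun ω => (hPQ ω).trans (hQR ω)

lemma refineBy_refines {M : Type*} (P : FinPartition Ω) (g : Ω → M) : (P.refineBy g).Refines P :=
  fun _ => inter_subset_left

end FinPartition

section Expectation

variable {μ : Ω → ℝ}

lemma sum_cell_pos (hμ : ∀ ω, 0 < μ ω) (P : FinPartition Ω) (ω : Ω) :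
    0 < ∑ ω' ∈ P.cell ω, μ ω' :=
  sum_pos (fun ω' _ => hμ ω') ⟨ω, P.mem_cell ω⟩

lemma sum_mul_condExp_cell (hμ : ∀ ω, 0 < μ ω) (P : FinPartition Ω) (g : Ω → ℝ) :
    ∑ ω, μ ω * condExp μ g (P.cell ω) = ∑ ω, μ ω * g ω := by
  calc ∑ ω, μ ω * condExp μ g (P.cell ω)
      = ∑ ω, ∑ ω' ∈ P.cell ω, μ ω * (μ ω' * g ω') / ∑ ω'' ∈ P.cell ω', μ ω'' := by
        refine sum_congr rfl fun ω _ => ?_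
        rw [condExp, mul_div_assoc', mul_sum, sum_div]
        refine sum_congr rfl fun ω' hω' => ?_
        rw [P.cell_eq ω ω' hω']
    _ = ∑ ω', ∑ ω ∈ P.cell ω', μ ω * (μ ω' * g ω') / ∑ ω'' ∈ P.cell ω', μ ω'' :=
        sum_comm' fun ω ω' => by simp [P.mem_cell_comm]
    _ = ∑ ω', μ ω' * g ω' := by
        refine sum_congr rfl fun ω' _ => ?_
        rw [← sum_div, ← sum_mul, mul_div_right_comm, div_self (sum_cell_pos hμ P ω').ne',
          one_mul]

variable {f : Ω → ℝ}

lemma expOn_eq_of_mem_cell (P : FinPartition Ω) {ω ω' : Ω} (h : ω' ∈ P.cell ω) :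
    expOn μ f P ω' = expOn μ f P ω := by
  rw [expOn, expOn, P.cell_eq ω ω' h]

lemma sum_mul_expOn_mul (hμ : ∀ ω, 0 < μ ω) (P : FinPartition Ω) {h : Ω → ℝ}
    (hh : ∀ ω, ∀ ω' ∈ P.cell ω, h ω' = h ω) :
    ∑ ω, μ ω * (expOn μ f P ω * h ω) = ∑ ω, μ ω * (f ω * h ω) := by
  refine (sum_congr rfl fun ω _ => ?_).trans (sum_mul_condExp_cell hμ P fun ω => f ω * h ω)
  rw [expOn, condExp, condExp, div_mul_eq_mul_div, sum_mul]
  congr 2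
  exact sum_congr rfl fun ω' hω' => by rw [hh ω ω' hω', mul_assoc]

omit [DecidableEq Ω] in
lemma norm2_nonneg (hμ : ∀ ω, 0 ≤ μ ω) (F : Ω → ℝ) : 0 ≤ norm2 μ F :=
  sum_nonneg fun ω _ => mul_nonneg (hμ ω) (sq_nonneg _)

/-- Pythagoras: `E_P` is the orthogonal projection of `E_R`. -/
lemma norm2_expOn_sub_expOn (hμ : ∀ ω, 0 < μ ω) {P R : FinPartition Ω}
    (hPR : ∀ ω, ∀ ω' ∈ R.cell ω, expOn μ f P ω' = expOn μ f P ω) :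
    norm2 μ (expOn μ f R - expOn μ f P) = norm2 μ (expOn μ f R) - norm2 μ (expOn μ f P) := by
  have hR := sum_mul_expOn_mul (f := f) hμ R hPR
  have hP := sum_mul_expOn_mul (f := f) hμ P fun _ _ => expOn_eq_of_mem_cell (μ := μ) (f := f) P
  have hexpand : norm2 μ (expOn μ f R - expOn μ f P) = norm2 μ (expOn μ f R)
      - 2 * ∑ ω, μ ω * (expOn μ f R ω * expOn μ f P ω)
      + ∑ ω, μ ω * (expOn μ f P ω * expOn μ f P ω) := by
    simp only [norm2, Pi.sub_apply, mul_sum, ← sum_sub_distrib, ← sum_add_distrib]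
    exact sum_congr rfl fun ω _ => by ring
  have hsq : norm2 μ (expOn μ f P) = ∑ ω, μ ω * (expOn μ f P ω * expOn μ f P ω) := by
    simp only [norm2, sq]
  rw [hexpand, hsq, hR, hP]
  ring

lemma expOn_mem_Icc (hμ : ∀ ω, 0 < μ ω) (hf : ∀ ω, f ω ∈ Set.Icc (0 : ℝ) 1)
    (P : FinPartition Ω) (ω : Ω) : expOn μ f P ω ∈ Set.Icc (0 : ℝ) 1 := by
  have hpos := sum_cell_pos hμ P ω
  refine ⟨div_nonneg (sum_nonneg fun ω' _ => mul_nonneg (hμ ω').le (hf ω').1) hpos.le, ?_⟩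
  rw [expOn, condExp, div_le_one hpos]
  exact sum_le_sum fun ω' _ => mul_le_of_le_one_right (hμ ω').le (hf ω').2

lemma norm2_expOn_le_one (hμ : ∀ ω, 0 < μ ω) (hμ1 : ∑ ω, μ ω = 1)
    (hf : ∀ ω, f ω ∈ Set.Icc (0 : ℝ) 1) (P : FinPartition Ω) : norm2 μ (expOn μ f P) ≤ 1 := by
  rw [← hμ1, norm2]
  refine sum_le_sum fun ω _ => mul_le_of_le_one_right (hμ ω).le ?_
  obtain ⟨h0, h1⟩ := expOn_mem_Icc hμ hf P ω
  exact pow_le_one₀ h0 h1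

omit [DecidableEq Ω] in
lemma sq_mul_sum_filter_lt_abs_le_norm2 (hμ : ∀ ω, 0 ≤ μ ω) (F : Ω → ℝ) {ε : ℝ} (hε : 0 ≤ ε) :
    ε ^ 2 * ∑ ω ∈ univ.filter (fun ω => ε < |F ω|), μ ω ≤ norm2 μ F := by
  rw [mul_sum]
  calc ∑ ω ∈ univ.filter (fun ω => ε < |F ω|), ε ^ 2 * μ ω
      ≤ ∑ ω ∈ univ.filter (fun ω => ε < |F ω|), μ ω * F ω ^ 2 := by
        refine sum_le_sum fun ω hω => ?_
        have hεF : ε ^ 2 ≤ F ω ^ 2 := by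
          rw [← sq_abs (F ω)]
          exact pow_le_pow_left₀ hε (mem_filter.mp hω).2.le 2
        nlinarith [hμ ω]
    _ ≤ norm2 μ F := sum_le_sum_of_subset_of_nonneg (filter_subset _ _) fun ω _ _ =>
        mul_nonneg (hμ ω) (sq_nonneg _)

omit [DecidableEq Ω] in
lemma norm2_sub_le (hμ : ∀ ω, 0 ≤ μ ω) (X Y Z : Ω → ℝ) :
    norm2 μ (X - Z) ≤ 2 * (norm2 μ (X - Y) + norm2 μ (Z - Y)) := by
  simp only [norm2, Pi.sub_apply, mul_add, mul_sum, ← sum_add_distrib]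
  exact sum_le_sum fun ω _ => by nlinarith [mul_nonneg (hμ ω) (sq_nonneg (X ω + Z ω - 2 * Y ω))]

end Expectation

def ChainBound (μ : Ω → ℝ) (m : ℝ) (X Y : Ω → ℝ) : Prop :=
  norm2 μ (Y - X) ≤ m * (norm2 μ Y - norm2 μ X)

section ChainBound

variable {μ : Ω → ℝ}

omit [DecidableEq Ω] in
lemma ChainBound.norm2_le (hμ : ∀ ω, 0 ≤ μ ω) {m : ℝ} (hm : 0 < m) {X Y : Ω → ℝ}
    (h : ChainBound μ m X Y) : norm2 μ X ≤ norm2 μ Y := by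
  have := (norm2_nonneg hμ (Y - X)).trans h
  nlinarith

omit [DecidableEq Ω] in
lemma ChainBound.mono (hμ : ∀ ω, 0 ≤ μ ω) {m m' : ℝ} (hm : 0 < m) (hmm' : m ≤ m')
    {X Y : Ω → ℝ} (h : ChainBound μ m X Y) : ChainBound μ m' X Y := by
  have := h.norm2_le hμ hm
  unfold ChainBound at h ⊢
  nlinarith

omit [DecidableEq Ω] in
/-- The pointwise inequality `m m' (a + b)² ≤ (m + m') (m' a² + m b²)` (its defect is
`(m b - m' a)²`) makes `ChainBound` compose. -/
lemma ChainBound.trans (hμ : ∀ ω, 0 ≤ μ ω) {m m' : ℝ} (hm : 0 < m) (hm' : 0 < m')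
    {X Y Z : Ω → ℝ} (hXY : ChainBound μ m X Y) (hYZ : ChainBound μ m' Y Z) :
    ChainBound μ (m + m') X Z := by
  have hsplit : m * m' * norm2 μ (Z - X)
      ≤ (m + m') * (m' * norm2 μ (Y - X) + m * norm2 μ (Z - Y)) := by
    simp only [norm2, Pi.sub_apply, mul_sum, ← sum_add_distrib]
    refine sum_le_sum fun ω _ => ?_
    nlinarith [mul_nonneg (hμ ω) (sq_nonneg (m * (Z ω - Y ω) - m' * (Y ω - X ω)))]
  unfold ChainBound at hXY hYZ ⊢
  have hmm' : 0 < m * m' := mul_pos hm hm'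
  refine le_of_mul_le_mul_left ?_ hmm'
  nlinarith [mul_le_mul_of_nonneg_left hXY hm'.le, mul_le_mul_of_nonneg_left hYZ hm.le]

variable {f : Ω → ℝ}

lemma chainBound_expOn (hμ : ∀ ω, 0 < μ ω) {P R : FinPartition Ω}
    (hPR : ∀ ω, ∀ ω' ∈ R.cell ω, expOn μ f P ω' = expOn μ f P ω) :
    ChainBound μ 1 (expOn μ f P) (expOn μ f R) := by
  rw [ChainBound, norm2_expOn_sub_expOn hμ hPR, one_mul]

end ChainBound

lemma exists_lt_sub_le_div (u : ℕ → ℝ) {K : ℕ} (hK : 0 < K) :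
    ∃ k < K, u (k + 1) - u k ≤ (u K - u 0) / K := by
  have hsum : ∑ k ∈ range K, (u (k + 1) - u k) ≤ ∑ _k ∈ range K, (u K - u 0) / K := by
    rw [sum_range_sub, sum_const, card_range, nsmul_eq_mul, mul_div_cancel₀]
    exact_mod_cast hK.ne'
  obtain ⟨k, hk, hle⟩ := exists_le_of_sum_le (nonempty_range_iff.mpr hK.ne') hsum
  exact ⟨k, mem_range.mp hk, hle⟩

lemma reachIn_succ_iff_right {V : Type*} {G : V → V → Prop} {k : ℕ} {u v : V} :
    reachIn G (k + 1) u v ↔ ∃ w, reachIn G k u w ∧ G w v := by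
  induction k generalizing u with
  | zero =>
    exact ⟨fun ⟨_, huw, hwv⟩ => ⟨u, rfl, hwv ▸ huw⟩, fun ⟨_, huw, hwv⟩ => ⟨v, huw ▸ hwv, rfl⟩⟩
  | succ k ih =>
    constructor
    · rintro ⟨w, huw, hwv⟩
      obtain ⟨x, hwx, hxv⟩ := ih.mp hwv
      exact ⟨x, ⟨w, huw, hwx⟩, hxv⟩
    · rintro ⟨x, ⟨w, huw, hwx⟩, hxv⟩
      exact ⟨w, huw, ih.mpr ⟨x, hwx, hxv⟩⟩

lemma List.eq_of_length_filter_eq_one {α : Type*} {l : List α} {p : α → Bool}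
    (h : (l.filter p).length = 1) {x y : α} (hx : x ∈ l) (hpx : p x) (hy : y ∈ l) (hpy : p y) :
    x = y := by
  obtain ⟨a, ha⟩ := List.length_eq_one_iff.mp h
  have hxa : x ∈ l.filter p := List.mem_filter.mpr ⟨hx, hpx⟩
  have hya : y ∈ l.filter p := List.mem_filter.mpr ⟨hy, hpy⟩
  rw [ha, List.mem_singleton] at hxa hya
  rw [hxa, hya]

lemma List.exists_lt_getElem_snd_eq {V : Type*} {O : List (V × V)} {root : V}
    (hprec : ∀ l₁ e l₂, O = l₁ ++ e :: l₂ → e.1 ≠ root → ∃ e' ∈ l₁, e'.2 = e.1)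
    {n : ℕ} (hn : n < O.length) (hroot : O[n].1 ≠ root) :
    ∃ m, ∃ hm : m < O.length, m < n ∧ O[m].2 = O[n].1 := by
  obtain ⟨e', he', he'n⟩ :=
    hprec _ _ _ (by rw [List.getElem_cons_drop, List.take_append_drop]) hroot
  obtain ⟨m, hm, rfl⟩ := List.mem_iff_getElem.mp he'
  rw [List.length_take] at hm
  exact ⟨m, by omega, by omega, by simpa using he'n⟩

def cyclicSchedule {α : Type*} (l : List α) (x : α) (u : ℕ) : α :=
  l.getD (u % l.length) x

lemma cyclicSchedule_mul_add {α : Type*} (l : List α) (x : α) (a : ℕ) {n : ℕ}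
    (hn : n < l.length) : cyclicSchedule l x (a * l.length + n) = l[n] := by
  rw [cyclicSchedule, Nat.mul_comm, Nat.mul_add_mod, Nat.mod_eq_of_lt hn,
    List.getD_eq_getElem _ _ hn]

/-- Agent `k`'s expectation `E_{k,t}` after `t` messages. -/
noncomputable def agentExp {N : ℕ} (μ f : Ω → ℝ) (Pi0 : Fin N → FinPartition Ω)
    (sched : ℕ → Fin N × Fin N) (t : ℕ) (k : Fin N) : Ω → ℝ :=
  expOn μ f (multiStep μ f Pi0 sched t k)

section Protocol

variable {N : ℕ} {μ f : Ω → ℝ} {Pi0 : Fin N → FinPartition Ω} {sched : ℕ → Fin N × Fin N}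

lemma multiStep_refines_of_le {t t' : ℕ} (h : t ≤ t') (k : Fin N) :
    (multiStep μ f Pi0 sched t' k).Refines (multiStep μ f Pi0 sched t k) := by
  induction t', h using Nat.le_induction with
  | base => exact fun _ => subset_rfl
  | succ t' _ ih =>
    refine FinPartition.Refines.trans ?_ ih
    simp only [multiStep]
    split_ifs
    · exact FinPartition.refineBy_refines _ _
    · exact fun _ => subset_rfl

lemma agentExp_sender_eq_of_mem_cell {c s : ℕ} (hcs : c < s) {ω ω' : Ω}
    (h : ω' ∈ (multiStep μ f Pi0 sched s (sched c).2).cell ω) :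
    agentExp μ f Pi0 sched c (sched c).1 ω' = agentExp μ f Pi0 sched c (sched c).1 ω := by
  have h' := multiStep_refines_of_le hcs (sched c).2 ω h
  simp only [multiStep, if_pos, FinPartition.refineBy, mem_inter, mem_filter] at h'
  exact h'.2.2

lemma chainBound_agentExp_of_le (hμ : ∀ ω, 0 < μ ω) {t t' : ℕ} (h : t ≤ t') (k : Fin N) :
    ChainBound μ 1 (agentExp μ f Pi0 sched t k) (agentExp μ f Pi0 sched t' k) :=
  chainBound_expOn hμ fun ω _ hω' => expOn_eq_of_mem_cell _ (multiStep_refines_of_le h k ω hω')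

lemma chainBound_agentExp_of_sched (hμ : ∀ ω, 0 < μ ω) {c s : ℕ} (hcs : c < s) {i j : Fin N}
    (hc : sched c = (i, j)) :
    ChainBound μ 1 (agentExp μ f Pi0 sched c i) (agentExp μ f Pi0 sched s j) := by
  have h := chainBound_expOn hμ fun _ _ hω' =>
    agentExp_sender_eq_of_mem_cell (f := f) (Pi0 := Pi0) (sched := sched) hcs hω'
  rwa [hc] at h

lemma norm2_agentExp_mono (hμ : ∀ ω, 0 < μ ω) {t t' : ℕ} (h : t ≤ t') (k : Fin N) :
    norm2 μ (agentExp μ f Pi0 sched t k) ≤ norm2 μ (agentExp μ f Pi0 sched t' k) :=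
  (chainBound_agentExp_of_le hμ h k).norm2_le (fun ω => (hμ ω).le) one_pos

/-- During one pass of `O₁` starting at time `τ`, the root's expectation at `τ` reaches an agent
at depth `k` of `T₁` by a chain of `k + 1` messages, once that agent has received its message. -/
lemma chainBound_agentExp_of_reachIn_down (hμ : ∀ ω, 0 < μ ω) {O₁ : List (Fin N × Fin N)}
    {root : Fin N} (hin : ∀ v, v ≠ root → (O₁.filter (fun e => e.2 = v)).length = 1)
    (hprec : ∀ l₁ e l₂, O₁ = l₁ ++ e :: l₂ → e.1 ≠ root → ∃ e' ∈ l₁, e'.2 = e.1)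
    {τ : ℕ} (hsched : ∀ n (hn : n < O₁.length), sched (τ + n) = O₁[n]) {k : ℕ} {v : Fin N}
    (hv : reachIn (fun a b => (a, b) ∈ O₁) k root v) {s : ℕ} (hτs : τ ≤ s)
    (hrecv : v = root ∨ ∃ n, ∃ hn : n < O₁.length, O₁[n].2 = v ∧ τ + n < s) :
    ChainBound μ (k + 1) (agentExp μ f Pi0 sched τ root) (agentExp μ f Pi0 sched s v) := by
  have hμ' : ∀ ω, 0 ≤ μ ω := fun ω => (hμ ω).le
  induction k generalizing v s with
  | zero =>
    subst hv
    simpa using chainBound_agentExp_of_le hμ hτs root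
  | succ k ih =>
    by_cases hvr : v = root
    · subst hvr
      refine (chainBound_agentExp_of_le hμ hτs _).mono hμ' one_pos ?_
      push_cast
      linarith [(k.cast_nonneg : (0 : ℝ) ≤ k)]
    obtain ⟨n, hn, hnv, hns⟩ := hrecv.resolve_left hvr
    obtain ⟨u, hu, huv⟩ := reachIn_succ_iff_right.mp hv
    have hedge : O₁[n] = (u, v) :=
      List.eq_of_length_filter_eq_one (hin v hvr) (List.getElem_mem hn) (by simpa using hnv)
        huv (by simp)
    have hurecv : u = root ∨ ∃ m, ∃ hm : m < O₁.length, O₁[m].2 = u ∧ τ + m < τ + n := by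
      by_cases hur : u = root
      · exact Or.inl hur
      obtain ⟨m, hm, hmn, hmu⟩ := List.exists_lt_getElem_snd_eq hprec hn (by rwa [hedge])
      exact Or.inr ⟨m, hm, by rw [hmu, hedge], by omega⟩
    have hmsg : ChainBound μ 1 (agentExp μ f Pi0 sched (τ + n) u) (agentExp μ f Pi0 sched s v) :=
      chainBound_agentExp_of_sched hμ hns (by rw [hsched n hn, hedge])
    have := (ih hu (by omega) hurecv).trans hμ' k.cast_add_one_pos one_pos hmsg
    exact_mod_cast this

lemma norm2_agentExp_le_of_reachIn_up (hμ : ∀ ω, 0 < μ ω) {O₂ : List (Fin N × Fin N)}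
    {root : Fin N} {τ L : ℕ} (hL : O₂.length ≤ L)
    (hsched : ∀ b n (hn : n < O₂.length), sched (b * L + τ + n) = O₂[n]) {k : ℕ} {v : Fin N}
    (hv : reachIn (fun a b => (a, b) ∈ O₂) k v root) (b : ℕ) :
    norm2 μ (agentExp μ f Pi0 sched (b * L + τ) v)
      ≤ norm2 μ (agentExp μ f Pi0 sched ((b + k) * L + τ) root) := by
  induction k generalizing v b with
  | zero =>
    subst hv
    rfl
  | succ k ih =>
    obtain ⟨w, hvw, hw⟩ := hv
    obtain ⟨n, hn, hedge⟩ := List.getElem_of_mem hvw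
    have hsend : b * L + τ + n < (b + 1) * L + τ := by rw [add_mul, one_mul]; omega
    calc norm2 μ (agentExp μ f Pi0 sched (b * L + τ) v)
        ≤ norm2 μ (agentExp μ f Pi0 sched (b * L + τ + n) v) := norm2_agentExp_mono hμ (by omega) v
      _ ≤ norm2 μ (agentExp μ f Pi0 sched ((b + 1) * L + τ) w) :=
        (chainBound_agentExp_of_sched hμ hsend (by rw [hsched b n hn, hedge])).norm2_le
          (fun ω => (hμ ω).le) one_pos
      _ ≤ norm2 μ (agentExp μ f Pi0 sched ((b + (k + 1)) * L + τ) root) := by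
        rw [← add_assoc, add_right_comm]; exact ih hw (b + 1)

end Protocol

section CyclicSchedule

variable {N : ℕ} {μ f : Ω → ℝ} (Pi0 : Fin N → FinPartition Ω) {O₁ O₂ : List (Fin N × Fin N)}
  (x : Fin N × Fin N) {root : Fin N} {d : ℕ}

lemma chainBound_cyclicSchedule_down (hμ : ∀ ω, 0 < μ ω)
    (hin : ∀ v, v ≠ root → (O₁.filter (fun e => e.2 = v)).length = 1)
    (hprec : ∀ l₁ e l₂, O₁ = l₁ ++ e :: l₂ → e.1 ≠ root → ∃ e' ∈ l₁, e'.2 = e.1)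
    {v : Fin N} (hv : ∃ k ≤ d, reachIn (fun a b => (a, b) ∈ O₁) k root v) (a : ℕ) :
    ChainBound μ (d + 1)
      (agentExp μ f Pi0 (cyclicSchedule (O₁ ++ O₂) x) (a * (O₁ ++ O₂).length) root)
      (agentExp μ f Pi0 (cyclicSchedule (O₁ ++ O₂) x) (a * (O₁ ++ O₂).length + O₁.length) v) := by
  obtain ⟨k, hkd, hk⟩ := hv
  have hsched : ∀ n (hn : n < O₁.length),
      cyclicSchedule (O₁ ++ O₂) x (a * (O₁ ++ O₂).length + n) = O₁[n] := fun n hn => by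
    rw [cyclicSchedule_mul_add _ _ _ (by simp; omega), List.getElem_append_left hn]
  have hrecv : v = root ∨ ∃ n, ∃ hn : n < O₁.length,
      O₁[n].2 = v ∧ a * (O₁ ++ O₂).length + n < a * (O₁ ++ O₂).length + O₁.length := by
    by_cases hvr : v = root
    · exact Or.inl hvr
    obtain ⟨e, he⟩ := List.length_pos_iff_exists_mem.mp (hin v hvr ▸ Nat.one_pos)
    obtain ⟨n, hn, rfl⟩ := List.mem_iff_getElem.mp (List.mem_of_mem_filter he)
    exact Or.inr ⟨n, hn, by simpa using (List.mem_filter.mp he).2, by omega⟩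
  refine (chainBound_agentExp_of_reachIn_down hμ hin hprec hsched hk (by omega) hrecv).mono
    (fun ω => (hμ ω).le) k.cast_add_one_pos ?_
  exact_mod_cast Nat.succ_le_succ hkd

lemma norm2_cyclicSchedule_le_up (hμ : ∀ ω, 0 < μ ω) {v : Fin N}
    (hv : ∃ k ≤ d, reachIn (fun a b => (a, b) ∈ O₂) k v root) (b : ℕ) :
    norm2 μ (agentExp μ f Pi0 (cyclicSchedule (O₁ ++ O₂) x) (b * (O₁ ++ O₂).length + O₁.length) v)
      ≤ norm2 μ (agentExp μ f Pi0 (cyclicSchedule (O₁ ++ O₂) x)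
          ((b + d + 1) * (O₁ ++ O₂).length) root) := by
  obtain ⟨k, hkd, hk⟩ := hv
  have hL : (O₁ ++ O₂).length = O₁.length + O₂.length := List.length_append
  have hsched : ∀ b n (hn : n < O₂.length),
      cyclicSchedule (O₁ ++ O₂) x (b * (O₁ ++ O₂).length + O₁.length + n) = O₂[n] :=
    fun b n hn => by
      rw [add_assoc, cyclicSchedule_mul_add _ _ _ (by omega),
        List.getElem_append_right (by omega)]
      simp
  refine (norm2_agentExp_le_of_reachIn_up hμ (by omega) hsched hk b).trans
    (norm2_agentExp_mono hμ ?_ root)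
  nlinarith

end CyclicSchedule

theorem exists_norm2_agentExp_sub_le {N : ℕ} {μ f : Ω → ℝ} (hμ : ∀ ω, 0 < μ ω)
    (hμ1 : ∑ ω, μ ω = 1) (hf : ∀ ω, f ω ∈ Set.Icc (0 : ℝ) 1) (Pi0 : Fin N → FinPartition Ω)
    {O₁ O₂ : List (Fin N × Fin N)} (x : Fin N × Fin N) {root : Fin N} {d K : ℕ} (hK : 0 < K)
    (hin : ∀ v, v ≠ root → (O₁.filter (fun e => e.2 = v)).length = 1)
    (hprec : ∀ l₁ e l₂, O₁ = l₁ ++ e :: l₂ → e.1 ≠ root → ∃ e' ∈ l₁, e'.2 = e.1)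
    (hdepth₁ : ∀ v, ∃ k ≤ d, reachIn (fun a b => (a, b) ∈ O₁) k root v)
    (hdepth₂ : ∀ v, ∃ k ≤ d, reachIn (fun a b => (a, b) ∈ O₂) k v root) :
    ∃ t ≤ K * (d + 1) * (O₁ ++ O₂).length, ∀ i j : Fin N,
      norm2 μ (agentExp μ f Pi0 (cyclicSchedule (O₁ ++ O₂) x) t i -
        agentExp μ f Pi0 (cyclicSchedule (O₁ ++ O₂) x) t j) ≤ 4 * (d + 1) / K := by
  have hμ' : ∀ ω, 0 ≤ μ ω := fun ω => (hμ ω).le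
  set L := (O₁ ++ O₂).length
  set E := agentExp μ f Pi0 (cyclicSchedule (O₁ ++ O₂) x)
  obtain ⟨a, haK, hgain⟩ := exists_lt_sub_le_div (fun a => norm2 μ (E (a * (d + 1) * L) root)) hK
  have hgain' : norm2 μ (E ((a + 1) * (d + 1) * L) root) - norm2 μ (E (a * (d + 1) * L) root)
      ≤ 1 / K := by
    have hlast : norm2 μ (E (K * (d + 1) * L) root) ≤ 1 := norm2_expOn_le_one hμ hμ1 hf _
    refine hgain.trans (div_le_div_of_nonneg_right ?_ K.cast_nonneg)
    linarith [norm2_nonneg hμ' (E (0 * (d + 1) * L) root)]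
  set t := a * (d + 1) * L + O₁.length
  have hnear : ∀ v, norm2 μ (E t v - E (a * (d + 1) * L) root) ≤ (d + 1) / K := by
    intro v
    have hup : norm2 μ (E t v) ≤ norm2 μ (E ((a + 1) * (d + 1) * L) root) := by
      convert norm2_cyclicSchedule_le_up (f := f) (O₁ := O₁) Pi0 x hμ (hdepth₂ v) (a * (d + 1))
        using 4
      ring
    calc norm2 μ (E t v - E (a * (d + 1) * L) root)
        ≤ (d + 1) * (norm2 μ (E t v) - norm2 μ (E (a * (d + 1) * L) root)) :=
          chainBound_cyclicSchedule_down Pi0 x hμ hin hprec (hdepth₁ v) (a * (d + 1))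
      _ ≤ (d + 1) * (1 / K) := by gcongr; linarith
      _ = (d + 1) / K := by ring
  have ht : t ≤ K * (d + 1) * L :=
    calc t ≤ a * (d + 1) * L + (d + 1) * L := by simp only [t, L, List.length_append]; nlinarith
      _ = (a + 1) * (d + 1) * L := by ring
      _ ≤ K * (d + 1) * L := by gcongr; omega
  refine ⟨t, ht, fun i j => ?_⟩
  calc norm2 μ (E t i - E t j)
      ≤ 2 * (norm2 μ (E t i - E (a * (d + 1) * L) root)
          + norm2 μ (E t j - E (a * (d + 1) * L) root)) := norm2_sub_le hμ' _ _ _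
    _ ≤ 2 * ((d + 1) / K + (d + 1) / K) := by gcongr <;> apply hnear
    _ = 4 * (d + 1) / K := by ring

lemma natCast_le_of_le_ceil_mul {N d t L : ℕ} {x : ℝ} (hx0 : 0 < x) (hx1 : x ≤ 1)
    (hd : 0 < d) (hL : L ≤ 2 * N) (ht : t ≤ ⌈8 * d / x⌉₊ * (d + 1) * L) :
    (t : ℝ) ≤ 36 * N * d ^ 2 / x := by
  have hceil : (⌈8 * d / x⌉₊ : ℝ) < 8 * d / x + 1 := Nat.ceil_lt_add_one (by positivity)
  have ht' : (t : ℝ) ≤ ⌈8 * d / x⌉₊ * (d + 1) * L := by exact_mod_cast ht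
  have hd' : (1 : ℝ) ≤ d := by exact_mod_cast hd
  have hdx : 1 ≤ d / x := by rw [le_div_iff₀ hx0]; linarith
  have hL' : (L : ℝ) ≤ 2 * N := by exact_mod_cast hL
  calc (t : ℝ) ≤ ⌈8 * d / x⌉₊ * (d + 1) * L := ht'
    _ ≤ (8 * d / x + d / x) * (2 * d) * (2 * N) := by gcongr <;> linarith
    _ = 36 * N * d ^ 2 / x := by ring

/-- the spanning-tree protocol brings all `N` agents within `ε` of each
other with probability `1 - δ` after `O(N d² / (δ ε²))` messages. -/
theorem stmt_9 :
    ∃ C : ℝ, 0 < C ∧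
      ∀ (Ω : Type) (_ : Fintype Ω) (_ : DecidableEq Ω) (_ : Nonempty Ω)
        (μ f : Ω → ℝ), (∀ ω, 0 < μ ω) → (∑ ω, μ ω) = 1 →
        (∀ ω, f ω ∈ Set.Icc (0 : ℝ) 1) →
        ∀ (N : ℕ) (hN : 0 < N) (G : Fin N → Fin N → Prop) (d : ℕ),
        -- `G` is strongly connected with diameter (at most) `d`:
        (∀ u v : Fin N, ∃ k ≤ d, reachIn G k u v) →
        ∀ (O₁ O₂ : List (Fin N × Fin N)),
        -- the edges of the spanning trees are edges of `G`:
        (∀ e ∈ O₁, G e.1 e.2) → (∀ e ∈ O₂, G e.1 e.2) →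
        -- `O₁` lists the `N - 1` edges of a spanning tree `T₁` directed away from the
        -- root (agent `1`): every non-root vertex has exactly one incoming edge:
        O₁.length = N - 1 →
        (∀ v : Fin N, v ≠ ⟨0, hN⟩ → (O₁.filter (fun e => e.2 = v)).length = 1) →
        -- `O₂` lists the `N - 1` edges of a spanning tree `T₂` directed toward the
        -- root: every non-root vertex has exactly one outgoing edge:
        O₂.length = N - 1 →
        (∀ v : Fin N, v ≠ ⟨0, hN⟩ → (O₂.filter (fun e => e.1 = v)).length = 1) →
        -- each tree has depth at most `d` (they have minimum diameter):
        (∀ v : Fin N, ∃ k ≤ d, reachIn (fun a b => (a, b) ∈ O₁) k ⟨0, hN⟩ v) →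
        (∀ v : Fin N, ∃ k ≤ d, reachIn (fun a b => (a, b) ∈ O₂) k v ⟨0, hN⟩) →
        -- in `O₁`, every edge originating at a non-root vertex `i` is preceded by an
        -- edge terminating at `i`:
        (∀ (l₁ : List (Fin N × Fin N)) (e : Fin N × Fin N) (l₂ : List (Fin N × Fin N)),
          O₁ = l₁ ++ e :: l₂ → e.1 ≠ ⟨0, hN⟩ → ∃ e' ∈ l₁, e'.2 = e.1) →
        -- in `O₂`, every edge originating at a non-leaf vertex `i` of `T₂` is preceded
        -- by an edge terminating at `i`:
        (∀ (l₁ : List (Fin N × Fin N)) (e : Fin N × Fin N) (l₂ : List (Fin N × Fin N)),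
          O₂ = l₁ ++ e :: l₂ → (∃ e'' ∈ O₂, e''.2 = e.1) → ∃ e' ∈ l₁, e'.2 = e.1) →
        ∀ (Pi0 : Fin N → FinPartition Ω) (ε δ : ℝ),
          ε ∈ Set.Ioo (0 : ℝ) 1 → δ ∈ Set.Ioc (0 : ℝ) 1 →
          -- the messages are sent along edges in the repeating order O₁, O₂, O₁, O₂, …
          ∃ t : ℕ, (t : ℝ) ≤ C * N * d ^ 2 / (δ * ε ^ 2) ∧
            ∀ i j : Fin N,
              ∑ ω ∈ Finset.univ.filter (fun ω =>
                  ε < |expOn μ f (multiStep μ f Pi0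
                        (fun u => (O₁ ++ O₂).getD (u % (O₁ ++ O₂).length) (⟨0, hN⟩, ⟨0, hN⟩)) t i) ω -
                      expOn μ f (multiStep μ f Pi0
                        (fun u => (O₁ ++ O₂).getD (u % (O₁ ++ O₂).length) (⟨0, hN⟩, ⟨0, hN⟩)) t j) ω|),
                μ ω ≤ δ := by
  refine ⟨36, by norm_num, ?_⟩
  intro Ω _ _ _ μ f hμ hμ1 hf N hN G d _ O₁ O₂ _ _ hlen₁ hin hlen₂ _ hdepth₁ hdepth₂ hprec₁ _
    Pi0 ε δ ⟨hε0, hε1⟩ ⟨hδ0, hδ1⟩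
  rcases Nat.eq_zero_or_pos d with rfl | hd
  · have hroot : ∀ v : Fin N, v = ⟨0, hN⟩ := fun v => by
      obtain ⟨k, hk, hv⟩ := hdepth₁ v
      obtain rfl := Nat.le_zero.mp hk
      exact hv.symm
    refine ⟨0, by simp, fun i j => ?_⟩
    rw [hroot i, hroot j]
    simp [not_lt.mpr hε0.le, hδ0.le]
  have hδε : 0 < δ * ε ^ 2 := by positivity
  have hK : 0 < ⌈8 * d / (δ * ε ^ 2)⌉₊ := Nat.ceil_pos.mpr (by positivity)
  have hbound : 4 * (d + 1) / (⌈8 * d / (δ * ε ^ 2)⌉₊ : ℝ) ≤ ε ^ 2 * δ := by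
    have hceil := Nat.le_ceil (8 * d / (δ * ε ^ 2))
    rw [div_le_iff₀ hδε] at hceil
    rw [div_le_iff₀ (by exact_mod_cast hK)]
    have hd' : (1 : ℝ) ≤ d := by exact_mod_cast hd
    nlinarith
  obtain ⟨t, htK, hagree⟩ := exists_norm2_agentExp_sub_le hμ hμ1 hf Pi0 (⟨0, hN⟩, ⟨0, hN⟩) hK
    hin hprec₁ hdepth₁ hdepth₂
  refine ⟨t, natCast_le_of_le_ceil_mul hδε (by nlinarith) hd (by simp; omega) htK, fun i j => ?_⟩
  exact le_of_mul_le_mul_left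
    ((sq_mul_sum_filter_lt_abs_le_norm2 (fun ω => (hμ ω).le) _ hε0.le).trans
      ((hagree i j).trans hbound)) (by positivity)
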